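/- arXiv:1502.07642 — 9 statements merged into one kernel-verified Lean document; each statement's English description precedes it below -/
import Mathlib

section
/- For N ≥ 1, 0 ≤ n ≤ N and real x, ∑_{ℓ=1}^∞ M(n,ℓ) x^{ℓ−1}/(ℓ−1)! = (sinh x)^{n−1} (cosh x)^{N−n−1} (n (cosh x)^2 + (N−n)(sinh x)^2), i.e., the derivative in x of (sinh x)^n (cosh x)^{N−n}. -/
/-!
Detecting the parity of each letter count with the characters `a ↦ ±1` of `(ℤ/2)^N` gives
`2^N M(n, L) = ∑_S (-1)^{|S ∩ [n]|} (N - 2|S|)^L`, the sum over subsets `S` of the alphabet.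
The exponential generating function of `M(n, ℓ + 1)` is therefore
`2^{-N} ∑_S (-1)^{|S ∩ [n]|} c_S e^{c_S x}` with `c_S = N - 2|S|`, the derivative of
`2^{-N} ∑_S (-1)^{|S ∩ [n]|} e^{c_S x}`, which is the expansion of the product of `n` factors
`sinh x = (e^x - e^{-x}) / 2` and `N - n` factors `cosh x = (e^x + e^{-x}) / 2`.
-/

open Real Finset

section FibreParity

variable {ι α R : Type*} [CommRing R] (p : ι → Prop) [DecidablePred p]

lemma neg_one_pow_card_filter (S : Finset ι) :
    (-1 : R) ^ #(S.filter p) = ∏ k ∈ S, if p k then -1 else 1 := by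
  rw [prod_ite, prod_const_one, mul_one, prod_const]

variable [Fintype ι] [DecidableEq ι] [Fintype α]

lemma sum_ite_mem_neg_one_one (S : Finset ι) :
    ∑ a, (if a ∈ S then (-1 : R) else 1) = Fintype.card ι - 2 * #S := by
  have h (a : ι) : (if a ∈ S then (-1 : R) else 1) = 1 - 2 * if a ∈ S then 1 else 0 := by
    split_ifs <;> ring
  simp only [h, sum_sub_distrib, sum_const, card_univ, nsmul_eq_mul, mul_one, ← mul_sum, sum_boole,
    filter_univ_mem]

lemma prod_ite_comp_mem (f : α → ι) (S : Finset ι) :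
    ∏ i, (if f i ∈ S then (-1 : R) else 1) = ∏ k ∈ S, (-1) ^ Fintype.card {i // f i = k} := by
  rw [← Fintype.prod_fiberwise f, ← Fintype.prod_ite_mem S]
  refine Fintype.prod_congr _ _ fun k => ?_
  rw [Fintype.prod_congr _ _ fun i => by rw [i.2], prod_const, card_univ]
  split_ifs <;> simp

lemma one_add_ite_neg_one_mul_neg_one_pow (q : Prop) [Decidable q] (m : ℕ) :
    1 + (if q then (-1 : R) else 1) * (-1) ^ m = if (if q then Odd m else Even m) then 2 else 0 := by
  simp only [neg_one_pow_eq_ite, ← Nat.not_even_iff_odd]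
  split_ifs <;> norm_num

lemma sum_neg_one_pow_card_filter_mul_prod_ite_mem (f : α → ι) :
    ∑ S : Finset ι, (-1 : R) ^ #(S.filter p) * ∏ i, (if f i ∈ S then -1 else 1) =
      if ∀ k, if p k then Odd (Fintype.card {i // f i = k}) else Even (Fintype.card {i // f i = k})
      then 2 ^ Fintype.card ι else 0 := by
  simp_rw [prod_ite_comp_mem f, neg_one_pow_card_filter p, ← prod_mul_distrib]
  rw [← powerset_univ, ← prod_one_add]
  simp_rw [one_add_ite_neg_one_mul_neg_one_pow]
  rw [Fintype.prod_ite_zero, prod_const, card_univ]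

theorem two_pow_card_mul_card_fibre_parity (L : ℕ) :
    2 ^ Fintype.card ι * (Fintype.card {f : Fin L → ι // ∀ k, if p k
        then Odd (Fintype.card {i // f i = k}) else Even (Fintype.card {i // f i = k})} : R) =
      ∑ S : Finset ι, (-1 : R) ^ #(S.filter p) * (Fintype.card ι - 2 * #S) ^ L := by
  simp_rw [← sum_ite_mem_neg_one_one, Fintype.sum_pow, mul_sum]
  rw [sum_comm]
  simp_rw [sum_neg_one_pow_card_filter_mul_prod_ite_mem p, Fintype.card_subtype]
  rw [sum_ite, sum_const_zero, add_zero, sum_const, nsmul_eq_mul, mul_comm]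

end FibreParity

section Hyperbolic

variable {ι : Type*} [Fintype ι] (p : ι → Prop) [DecidablePred p]

lemma prod_ite_sinh_cosh_eq_sum_exp (x : ℝ) :
    ∏ k, (if p k then sinh x else cosh x) = 2⁻¹ ^ Fintype.card ι *
      ∑ S : Finset ι, (-1 : ℝ) ^ #(S.filter p) * exp ((Fintype.card ι - 2 * #S) * x) := by
  have h (k : ι) : (if p k then sinh x else cosh x) =
      2⁻¹ * exp x * (1 + (if p k then -1 else 1) * exp (-x) ^ 2) := by
    have hexp : exp x * exp (-x) ^ 2 = exp (-x) := by rw [← exp_nat_mul, ← exp_add]; ring_nf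
    split_ifs
    · rw [sinh_eq]; linear_combination 2⁻¹ * hexp
    · rw [cosh_eq]; linear_combination -2⁻¹ * hexp
  simp_rw [h, prod_mul_distrib, prod_const, card_univ, ← powerset_univ, prod_one_add,
    prod_mul_distrib, ← neg_one_pow_card_filter, prod_const, mul_sum]
  refine sum_congr rfl fun S _ => ?_
  have hexp : exp x ^ Fintype.card ι * (exp (-x) ^ 2) ^ #S =
      exp ((Fintype.card ι - 2 * #S) * x) := by
    rw [← pow_mul, ← exp_nat_mul, ← exp_nat_mul, ← exp_add]; push_cast; ring_nf
  rw [← hexp]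
  ring

lemma hasDerivAt_prod_ite_sinh_cosh (x : ℝ) :
    HasDerivAt (fun y => ∏ k, if p k then sinh y else cosh y) (2⁻¹ ^ Fintype.card ι *
      ∑ S : Finset ι, (-1 : ℝ) ^ #(S.filter p) *
        (Fintype.card ι - 2 * #S) * exp ((Fintype.card ι - 2 * #S) * x)) x := by
  simp_rw [prod_ite_sinh_cosh_eq_sum_exp p]
  refine .const_mul _ (.fun_sum fun S _ => ?_)
  exact (((hasDerivAt_id x).const_mul _).exp.const_mul _).congr_deriv (by simp only [id_eq, mul_one]; ring)

variable [DecidableEq ι] in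
theorem hasSum_card_fibre_parity_mul_pow_div_factorial (x : ℝ) :
    HasSum (fun ℓ : ℕ => (Fintype.card {f : Fin (ℓ + 1) → ι // ∀ k, if p k
        then Odd (Fintype.card {i // f i = k}) else Even (Fintype.card {i // f i = k})} : ℝ) *
          x ^ ℓ / ℓ.factorial)
      (2⁻¹ ^ Fintype.card ι * ∑ S : Finset ι, (-1 : ℝ) ^ #(S.filter p) *
        (Fintype.card ι - 2 * #S) * exp ((Fintype.card ι - 2 * #S) * x)) := by
  have hasSum_exp (y : ℝ) : HasSum (fun ℓ : ℕ => y ^ ℓ / ℓ.factorial) (exp y) :=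
    exp_eq_exp_ℝ ▸ NormedSpace.expSeries_div_hasSum_exp y
  refine ((hasSum_sum fun S _ => (hasSum_exp _).mul_left _).mul_left _).congr_fun fun ℓ => ?_
  rw [← inv_mul_cancel_left₀ (pow_ne_zero (Fintype.card ι) two_ne_zero) (Fintype.card _ : ℝ),
    two_pow_card_mul_card_fibre_parity, inv_pow, mul_assoc, mul_div_assoc, sum_mul, sum_div]
  exact congrArg _ (sum_congr rfl fun S _ => by rw [mul_pow]; ring)

lemma hasDerivAt_sinh_pow_mul_cosh_pow (a b : ℕ) (x : ℝ) :
    HasDerivAt (fun y => sinh y ^ a * cosh y ^ b)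
      (sinh x ^ ((a : ℤ) - 1) * cosh x ^ ((b : ℤ) - 1) * (a * cosh x ^ 2 + b * sinh x ^ 2)) x := by
  refine (((hasDerivAt_sinh x).pow a).mul ((hasDerivAt_cosh x).pow b)).congr_deriv ?_
  rw [zpow_sub_one₀ (cosh_pos x).ne', zpow_natCast]
  rcases a with _ | a <;> rcases b with _ | b <;> simp <;> field_simp <;> ring

end Hyperbolic

lemma Fin.prod_ite_val_lt {M : Type*} [CommMonoid M] {N n : ℕ} (hn : n ≤ N) (a b : M) :
    ∏ k : Fin N, (if (k : ℕ) < n then a else b) = a ^ n * b ^ (N - n) := by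
  have hlt : #{k : Fin N | (k : ℕ) < n} = n := by rw [Fin.card_filter_val_lt, min_eq_right hn]
  have hge : #{k : Fin N | ¬(k : ℕ) < n} = N - n := by
    have := card_filter_add_card_filter_not (s := univ) fun k : Fin N => (k : ℕ) < n
    rw [hlt, card_univ, Fintype.card_fin] at this
    omega
  rw [prod_ite, Finset.prod_const, Finset.prod_const, hlt, hge]

theorem stmt1_general (N n : ℕ) (hn : n ≤ N) (x : ℝ) :
    ∑' ℓ : ℕ,
      ((Fintype.card {f : Fin (ℓ + 1) → Fin N //
          ∀ k : Fin N, if (k : ℕ) < n then Odd (Fintype.card {i : Fin (ℓ + 1) // f i = k})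
            else Even (Fintype.card {i : Fin (ℓ + 1) // f i = k})} : ℝ)
        * x ^ ℓ / (Nat.factorial ℓ))
      = (Real.sinh x) ^ ((n : ℤ) - 1) * (Real.cosh x) ^ ((N : ℤ) - (n : ℤ) - 1)
        * ((n : ℝ) * (Real.cosh x) ^ 2 + ((N : ℝ) - (n : ℝ)) * (Real.sinh x) ^ 2) := by
  have hderiv := hasDerivAt_prod_ite_sinh_cosh (fun k : Fin N => (k : ℕ) < n) x
  simp_rw [Fin.prod_ite_val_lt hn] at hderiv
  have hvalue := hderiv.unique (hasDerivAt_sinh_pow_mul_cosh_pow n (N - n) x)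
  push_cast [hn] at hvalue
  -- `convert` identifies the `Fintype` instance of the statement with the generic one
  convert (hasSum_card_fibre_parity_mul_pow_div_factorial _ x).tsum_eq.trans hvalue

/-- Derivative version of the walk generating function: with `M(n,ℓ)` the number of
sequences `(a_1,…,a_ℓ) ∈ {1,…,N}^ℓ` in which each of `1,…,n` occurs an odd number of times
and each of `n+1,…,N` an even number of times, one has
`∑_{ℓ≥1} M(n,ℓ) x^{ℓ-1}/(ℓ-1)! = (sinh x)^{n-1} (cosh x)^{N-n-1} (n cosh²x + (N-n) sinh²x)`
(integer exponents). -/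
theorem stmt1 (N n : ℕ) (hN : 1 ≤ N) (hn : n ≤ N) (x : ℝ) :
    ∑' ℓ : ℕ,
      ((Fintype.card {f : Fin (ℓ + 1) → Fin N //
          ∀ k : Fin N, if (k : ℕ) < n then Odd (Fintype.card {i : Fin (ℓ + 1) // f i = k})
            else Even (Fintype.card {i : Fin (ℓ + 1) // f i = k})} : ℝ)
        * x ^ ℓ / (Nat.factorial ℓ))
      = (Real.sinh x) ^ ((n : ℤ) - 1) * (Real.cosh x) ^ ((N : ℤ) - (n : ℤ) - 1)
        * ((n : ℝ) * (Real.cosh x) ^ 2 + ((N : ℝ) - (n : ℝ)) * (Real.sinh x) ^ 2) :=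
  stmt1_general N n hn x
end

section
/- Suppose N ≥ 7 and s ≥ 1 is a real number. Define g(y,s) = (sinh y)^s (cosh y)^{N−s} for y > 0. Then for every fixed y > 0, the partial derivative ∂g/∂y(y,s) = (sinh y)^{−1}(cosh y)^{N−1}(tanh y)^s (s + N (sinh y)^2) is a decreasing function of s on s ∈ [1, N]. -/
open Real Set

/-! The `y`-derivative is the product rule together with `cosh² y = 1 + sinh² y`.
As a function of `s` it has the form `c tˢ (s + a)` with `t = tanh y ∈ (0, 1)`, whose
`s`-derivative `c tˢ (1 - (s + a) log coth y)` is nonpositive for `s ≥ 1` as soon as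
`(1 + a) log coth y ≥ 1`. Keeping the first term of the positive series
`2 log coth y = log (1 + sinh⁻² y) = ∑ 2 / ((2k + 1) cosh (2y) ^ (2k + 1))` gives
`log coth y ≥ 1 / cosh 2y`, and `cosh 2y = 1 + 2 sinh² y ≤ 1 + N sinh² y` for `N ≥ 2`. -/

namespace Real

theorem tanh_pos {y : ℝ} (hy : 0 < y) : 0 < tanh y := by
  rw [tanh_eq_sinh_div_cosh]
  exact div_pos (sinh_pos_iff.2 hy) (cosh_pos y)

theorem inv_cosh_two_mul_le_neg_log_tanh {y : ℝ} (hy : 0 < y) :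
    (cosh (2 * y))⁻¹ ≤ -log (tanh y) := by
  have hS : 0 < sinh y := sinh_pos_iff.2 hy
  have hsum := hasSum_log_one_add_inv (pow_pos hS 2)
  have hfirst := le_hasSum hsum 0 fun k _ => by positivity
  have hcosh : cosh (2 * y) = 2 * sinh y ^ 2 + 1 := by rw [cosh_two_mul, cosh_sq]; ring
  have hlog : log (1 + (sinh y ^ 2)⁻¹) = -2 * log (tanh y) := by
    rw [show 1 + (sinh y ^ 2)⁻¹ = (tanh y ^ 2)⁻¹ by
        rw [tanh_eq_sinh_div_cosh, div_pow, inv_div, cosh_sq]; field_simp,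
      log_inv, log_pow]
    push_cast; ring
  simp only [Nat.cast_zero, mul_zero, zero_add, div_one, mul_one, pow_one, hlog,
    ← hcosh] at hfirst
  rw [inv_eq_one_div]
  linarith

theorem antitoneOn_mul_rpow_mul_add {c t a s₀ : ℝ} (hc : 0 ≤ c) (ht₀ : 0 < t) (ht₁ : t < 1)
    (h : 1 ≤ (s₀ + a) * -log t) : AntitoneOn (fun s => c * t ^ s * (s + a)) (Ici s₀) := by
  have hlog : log t < 0 := log_neg ht₀ ht₁
  have hderiv (s : ℝ) : HasDerivAt (fun s => t ^ s * (s + a))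
      (t ^ s * log t * (s + a) + t ^ s * 1) s :=
    ((hasStrictDerivAt_const_rpow ht₀ s).hasDerivAt).mul ((hasDerivAt_id s).add_const a)
  have hdiff : Differentiable ℝ (fun s => t ^ s * (s + a)) := fun s => (hderiv s).differentiableAt
  have hanti : AntitoneOn (fun s => t ^ s * (s + a)) (Ici s₀) := by
    refine antitoneOn_of_deriv_nonpos (convex_Ici s₀) hdiff.continuous.continuousOn
      hdiff.differentiableOn fun s hs => ?_
    rw [interior_Ici] at hs
    have hs' : 1 ≤ (s + a) * -log t := h.trans (by nlinarith [mem_Ioi.1 hs])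
    rw [(hderiv s).deriv]
    have : 0 < t ^ s := rpow_pos_of_pos ht₀ s
    nlinarith
  intro u hu v hv huv
  simp only [mul_assoc]
  exact mul_le_mul_of_nonneg_left (hanti hu hv huv) hc

theorem hasDerivAt_sinh_rpow_mul_cosh_rpow {y : ℝ} (hy : 0 < y) (s n : ℝ) :
    HasDerivAt (fun z => sinh z ^ s * cosh z ^ (n - s))
      ((sinh y)⁻¹ * cosh y ^ (n - 1) * tanh y ^ s * (s + n * sinh y ^ 2)) y := by
  have hS : 0 < sinh y := sinh_pos_iff.2 hy
  have hC : 0 < cosh y := cosh_pos y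
  refine (((hasDerivAt_sinh y).rpow_const (Or.inl hS.ne')).mul
    ((hasDerivAt_cosh y).rpow_const (Or.inl hC.ne'))).congr_deriv ?_
  rw [tanh_eq_sinh_div_cosh, div_rpow hS.le hC.le, rpow_sub hC n 1, rpow_sub hS s 1,
    rpow_sub hC (n - s) 1, rpow_sub hC n s, rpow_one, rpow_one,
    show s + n * sinh y ^ 2 = s * cosh y ^ 2 + (n - s) * sinh y ^ 2 by rw [cosh_sq]; ring]
  field_simp

end Real

/-- For `N ≥ 7`, `y > 0` and `s ∈ [1,N]`, the partial derivative in `y` of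
`g(y,s) = (sinh y)^s (cosh y)^(N-s)` equals
`(sinh y)⁻¹ (cosh y)^(N-1) (tanh y)^s (s + N sinh²y)`, and this is a decreasing
function of `s` on `[1, N]`. -/
theorem stmt2 (N : ℕ) (hN : 7 ≤ N) (y : ℝ) (hy : 0 < y) :
    (∀ s ∈ Icc (1 : ℝ) (N : ℝ),
      HasDerivAt (fun z : ℝ => (Real.sinh z) ^ s * (Real.cosh z) ^ ((N : ℝ) - s))
        ((Real.sinh y)⁻¹ * (Real.cosh y) ^ ((N : ℝ) - 1) * (Real.tanh y) ^ s
          * (s + (N : ℝ) * (Real.sinh y) ^ 2)) y) ∧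
    AntitoneOn (fun s : ℝ =>
        (Real.sinh y)⁻¹ * (Real.cosh y) ^ ((N : ℝ) - 1) * (Real.tanh y) ^ s
          * (s + (N : ℝ) * (Real.sinh y) ^ 2))
      (Icc (1 : ℝ) (N : ℝ)) := by
  refine ⟨fun s _ => hasDerivAt_sinh_rpow_mul_cosh_rpow hy s N, ?_⟩
  have hN2 : (2 : ℝ) ≤ N := by exact_mod_cast le_trans (by norm_num) hN
  have hcosh : cosh (2 * y) ≤ 1 + N * sinh y ^ 2 := by
    rw [cosh_two_mul, cosh_sq]; nlinarith [sq_nonneg (sinh y)]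
  have hstart : 1 ≤ (1 + N * sinh y ^ 2) * -log (tanh y) :=
    calc (1 : ℝ) = cosh (2 * y) * (cosh (2 * y))⁻¹ := (mul_inv_cancel₀ (cosh_pos _).ne').symm
      _ ≤ (1 + N * sinh y ^ 2) * -log (tanh y) :=
        mul_le_mul hcosh (inv_cosh_two_mul_le_neg_log_tanh hy) (by positivity)
          ((cosh_pos _).le.trans hcosh)
  have hc : 0 ≤ (sinh y)⁻¹ * cosh y ^ ((N : ℝ) - 1) := by
    have := sinh_pos_iff.2 hy; positivity
  exact (antitoneOn_mul_rpow_mul_add hc (tanh_pos hy) (tanh_lt_one y) hstart).mono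
    Icc_subset_Ici_self
end

section
/- For every y > 0 and every real s with 1 ≤ s ≤ N and N ≥ 7, one has (coth y)^{s + N (sinh y)^2} ≥ e. -/
/-!
Write `t = sinh y`, `c = cosh y`. Since `coth y > 1` and `s + N t² ≥ 1 + 7 t²`, it suffices that
`log (c / t) * (1 + 7 t²) ≥ 1`. If `t ≤ 1/e` then already `log (c / t) ≥ -log t ≥ 1`. Otherwise
`t > 1/3`, so `c ≤ 6 t`, and `log (c / t) ≥ 1 - t / c = (c - t) / c` together with
`c - t = 1 / (c + t) ≥ 1 / (7 t)` gives the bound.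
-/

open Real

namespace Real

lemma one_lt_cosh_div_sinh {y : ℝ} (hy : 0 < y) : 1 < cosh y / sinh y :=
  (one_lt_div (sinh_pos_iff.mpr hy)).mpr (sinh_lt_cosh y)

lemma one_le_log_cosh_div_sinh {y : ℝ} (hy : 0 < y) (ht : sinh y ≤ exp (-1)) :
    1 ≤ log (cosh y / sinh y) := by
  have ht0 : 0 < sinh y := sinh_pos_iff.mpr hy
  have hlog_sinh : log (sinh y) ≤ -1 := by
    simpa using log_le_log ht0 ht
  rw [log_div (cosh_pos y).ne' ht0.ne']
  linarith [log_nonneg (one_le_cosh y)]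

lemma cosh_le_six_mul_sinh {y : ℝ} (ht : 1 / 3 ≤ sinh y) : cosh y ≤ 6 * sinh y := by
  have hsq : cosh y ^ 2 = sinh y ^ 2 + 1 := cosh_sq y
  nlinarith [cosh_pos y]

lemma cosh_le_mul_cosh_sub_sinh {y : ℝ} (ht : 1 / 3 ≤ sinh y) :
    cosh y ≤ (1 + 7 * sinh y ^ 2) * (cosh y - sinh y) := by
  have hsix := cosh_le_six_mul_sinh ht
  have hsq : (cosh y - sinh y) * (cosh y + sinh y) = 1 := by
    linear_combination cosh_sq_sub_sinh_sq y
  -- `7 t ≥ c + t` and `(c - t)(c + t) = 1` give `7 t² (c - t) ≥ t`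
  nlinarith [sub_pos.mpr (sinh_lt_cosh y)]

lemma one_le_log_cosh_div_sinh_mul {y : ℝ} (hy : 0 < y) :
    1 ≤ log (cosh y / sinh y) * (1 + 7 * sinh y ^ 2) := by
  rcases le_or_gt (sinh y) (exp (-1)) with ht | ht
  · exact one_le_mul_of_one_le_of_one_le (one_le_log_cosh_div_sinh hy ht)
      (le_add_of_nonneg_right (by positivity))
  · have hc0 : 0 < cosh y := cosh_pos y
    have ht3 : 1 / 3 ≤ sinh y := by
      have : 1 / 3 < exp (-1) := by
        rw [exp_neg, one_div, inv_lt_inv₀ (by norm_num) (exp_pos 1)]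
        linarith [exp_one_lt_d9]
      linarith
    have hlog : (cosh y - sinh y) / cosh y ≤ log (cosh y / sinh y) := by
      have := one_sub_inv_le_log_of_pos (div_pos hc0 (sinh_pos_iff.mpr hy))
      rwa [inv_div, one_sub_div hc0.ne'] at this
    calc 1 ≤ (cosh y - sinh y) / cosh y * (1 + 7 * sinh y ^ 2) := by
          rw [div_mul_eq_mul_div, one_le_div hc0, mul_comm]
          exact cosh_le_mul_cosh_sub_sinh ht3
      _ ≤ log (cosh y / sinh y) * (1 + 7 * sinh y ^ 2) := by gcongr

end Real

theorem stmt3_general (N : ℕ) (hN : 7 ≤ N) (s : ℝ) (hs1 : 1 ≤ s)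
    (y : ℝ) (hy : 0 < y) :
    Real.exp 1 ≤ (Real.cosh y / Real.sinh y) ^ (s + (N : ℝ) * (Real.sinh y) ^ 2) := by
  have hcoth := one_lt_cosh_div_sinh hy
  have hexponent : 1 + 7 * sinh y ^ 2 ≤ s + (N : ℝ) * sinh y ^ 2 := by
    have hN7 : (7 : ℝ) ≤ N := by exact_mod_cast hN
    gcongr
  rw [rpow_def_of_pos (by linarith), exp_le_exp]
  calc 1 ≤ log (cosh y / sinh y) * (1 + 7 * sinh y ^ 2) := one_le_log_cosh_div_sinh_mul hy
    _ ≤ log (cosh y / sinh y) * (s + N * sinh y ^ 2) := by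
      gcongr
      exact (log_pos hcoth).le

/-- For `N ≥ 7`, `1 ≤ s ≤ N` and `y > 0`, one has `(coth y)^(s + N sinh²y) ≥ e`. -/
theorem stmt3 (N : ℕ) (hN : 7 ≤ N) (s : ℝ) (hs1 : 1 ≤ s) (hsN : s ≤ (N : ℝ))
    (y : ℝ) (hy : 0 < y) :
    Real.exp 1 ≤ (Real.cosh y / Real.sinh y) ^ (s + (N : ℝ) * (Real.sinh y) ^ 2) :=
  stmt3_general N hN s hs1 y hy
end

section
/- For y > arccoth(e) (i.e., coth y < e), the function y ↦ (coth y)^{(sinh y)^2} is increasing in y, and hence (coth y)^{(sinh y)^2} ≥ e^{1/(e²−1)} for all such y. -/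
/-!
Write `(coth y) ^ (sinh² y) = exp (g y)` with `g y = sinh² y · log (coth y)`. Since
`g' y = 2 sinh y cosh y · log (coth y) - tanh y`, positivity of `g'` amounts to
`log (coth y) > 1 / (2 cosh² y) = (1 - tanh² y) / 2`, which follows from `log x ≥ 1 - 1/x`.
At `y₀ = arcoth e = artanh e⁻¹` one has `sinh² y₀ = 1 / (e² - 1)`, giving the lower bound,
and `coth y < e` says exactly that `y > y₀`.
-/

open Real Set

lemma one_sub_inv_sq_div_two_lt_log {x : ℝ} (hx : 1 < x) : (1 - (x ^ 2)⁻¹) / 2 < log x := by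
  have hx0 : 0 < x := by linarith
  have hinv : x⁻¹ < 1 := inv_lt_one_of_one_lt₀ hx
  calc (1 - (x ^ 2)⁻¹) / 2 = (1 - x⁻¹) * ((1 + x⁻¹) / 2) := by rw [← inv_pow]; ring
    _ < 1 - x⁻¹ := mul_lt_of_lt_one_right (by linarith) (by linarith)
    _ ≤ log x := one_sub_inv_le_log_of_pos hx0

noncomputable def sinhSqLogCoth (y : ℝ) : ℝ := sinh y ^ 2 * log (cosh y / sinh y)

lemma hasDerivAt_sinhSqLogCoth {y : ℝ} (hy : 0 < y) :
    HasDerivAt sinhSqLogCoth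
      (2 * sinh y * cosh y * log (cosh y / sinh y) - sinh y / cosh y) y := by
  have hs : sinh y ≠ 0 := (sinh_pos_iff.mpr hy).ne'
  have hc : cosh y ≠ 0 := (cosh_pos y).ne'
  have hcoth : cosh y / sinh y ≠ 0 := div_ne_zero hc hs
  have := ((hasDerivAt_sinh y).fun_pow 2).fun_mul
    (((hasDerivAt_cosh y).fun_div (hasDerivAt_sinh y) hs).log hcoth)
  refine this.congr_deriv ?_
  field_simp
  linear_combination (-sinh y) * cosh_sq_sub_sinh_sq y

lemma sinhSqLogCoth_deriv_pos {y : ℝ} (hy : 0 < y) :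
    0 < 2 * sinh y * cosh y * log (cosh y / sinh y) - sinh y / cosh y := by
  have hs : 0 < sinh y := sinh_pos_iff.mpr hy
  have hc : 0 < cosh y := cosh_pos y
  have hid : cosh y ^ 2 - sinh y ^ 2 = 1 := cosh_sq_sub_sinh_sq y
  have hcoth : 1 < cosh y / sinh y := by
    rw [one_lt_div hs]
    nlinarith
  have hlog := one_sub_inv_sq_div_two_lt_log hcoth
  have hbound : (1 - ((cosh y / sinh y) ^ 2)⁻¹) / 2 = 1 / (2 * cosh y ^ 2) := by
    field_simp
    linarith
  rw [hbound] at hlog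
  have hprod : 2 * sinh y * cosh y * (1 / (2 * cosh y ^ 2)) = sinh y / cosh y := by
    field_simp
  linarith [mul_lt_mul_of_pos_left hlog (by positivity : 0 < 2 * sinh y * cosh y)]

lemma strictMonoOn_sinhSqLogCoth : StrictMonoOn sinhSqLogCoth (Ioi 0) := by
  apply strictMonoOn_of_deriv_pos (convex_Ioi 0)
  · exact fun y hy => (hasDerivAt_sinhSqLogCoth hy).continuousAt.continuousWithinAt
  · intro y hy
    rw [interior_Ioi] at hy
    rw [(hasDerivAt_sinhSqLogCoth hy).deriv]
    exact sinhSqLogCoth_deriv_pos hy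

lemma coth_rpow_sinh_sq_eq_exp {y : ℝ} (hy : 0 < y) :
    (cosh y / sinh y) ^ (sinh y ^ 2) = exp (sinhSqLogCoth y) := by
  rw [rpow_def_of_pos (div_pos (cosh_pos y) (sinh_pos_iff.mpr hy)), sinhSqLogCoth, mul_comm]

lemma strictMonoOn_coth_rpow_sinh_sq :
    StrictMonoOn (fun y : ℝ => (cosh y / sinh y) ^ (sinh y ^ 2)) (Ioi 0) := by
  intro a ha b hb hab
  dsimp only
  rw [coth_rpow_sinh_sq_eq_exp ha, coth_rpow_sinh_sq_eq_exp hb]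
  exact exp_lt_exp.mpr (strictMonoOn_sinhSqLogCoth ha hb hab)

lemma artanh_inv_pos {c : ℝ} (hc : 1 < c) : 0 < artanh c⁻¹ :=
  artanh_pos ⟨inv_pos.mpr (by linarith), inv_lt_one_of_one_lt₀ hc⟩

lemma coth_rpow_sinh_sq_artanh_inv {c : ℝ} (hc : 1 < c) :
    (cosh (artanh c⁻¹) / sinh (artanh c⁻¹)) ^ (sinh (artanh c⁻¹) ^ 2) = c ^ (1 / (c ^ 2 - 1)) := by
  have hc0 : 0 < c := by linarith
  have hmem : c⁻¹ ∈ Ioo (-1) 1 := ⟨by linarith [inv_pos.mpr hc0], inv_lt_one_of_one_lt₀ hc⟩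
  have hsq : 0 < 1 - c⁻¹ ^ 2 := by nlinarith [inv_lt_one_of_one_lt₀ hc, inv_pos.mpr hc0]
  have hsqrt : √(1 - c⁻¹ ^ 2) ≠ 0 := (sqrt_pos.mpr hsq).ne'
  have hcoth : cosh (artanh c⁻¹) / sinh (artanh c⁻¹) = c := by
    rw [cosh_artanh hmem, sinh_artanh hmem, div_div_div_cancel_right₀ hsqrt, one_div, inv_inv]
  have hsinh_sq : sinh (artanh c⁻¹) ^ 2 = 1 / (c ^ 2 - 1) := by
    have hc2 : c ^ 2 - 1 ≠ 0 := by nlinarith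
    rw [sinh_artanh hmem, div_pow, sq_sqrt hsq.le]
    field_simp
  rw [hcoth, hsinh_sq]

lemma artanh_inv_lt_of_coth_lt {y c : ℝ} (hy : 0 < y) (h : cosh y / sinh y < c) :
    artanh c⁻¹ < y := by
  have hcoth : 0 < cosh y / sinh y := div_pos (cosh_pos y) (sinh_pos_iff.mpr hy)
  have htanh : c⁻¹ < tanh y := by
    rw [tanh_eq_sinh_div_cosh, ← inv_div]
    exact inv_strictAnti₀ hcoth h
  calc artanh c⁻¹ < artanh (tanh y) :=
        artanh_lt_artanh (by linarith [inv_pos.mpr (hcoth.trans h)]) (tanh_lt_one y) htanh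
    _ = y := artanh_tanh y

/-- On the set of `y > 0` with `coth y < e`, the function `y ↦ (coth y)^(sinh²y)` is
strictly increasing, and on this set it is at least `e^(1/(e²-1))`. -/
theorem stmt4 :
    StrictMonoOn (fun y : ℝ => (Real.cosh y / Real.sinh y) ^ ((Real.sinh y) ^ 2))
      {y : ℝ | 0 < y ∧ Real.cosh y / Real.sinh y < Real.exp 1} ∧
    ∀ y : ℝ, 0 < y → Real.cosh y / Real.sinh y < Real.exp 1 →
      Real.exp (1 / (Real.exp 1 ^ 2 - 1))
        ≤ (Real.cosh y / Real.sinh y) ^ ((Real.sinh y) ^ 2) := by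
  refine ⟨strictMonoOn_coth_rpow_sinh_sq.mono fun y hy => hy.1, fun y hy hcoth => ?_⟩
  have he : 1 < exp 1 := one_lt_exp_iff.mpr one_pos
  calc exp (1 / (exp 1 ^ 2 - 1)) = exp 1 ^ (1 / (exp 1 ^ 2 - 1)) := (exp_one_rpow _).symm
    _ = (cosh (artanh (exp 1)⁻¹) / sinh (artanh (exp 1)⁻¹)) ^ (sinh (artanh (exp 1)⁻¹) ^ 2) :=
        (coth_rpow_sinh_sq_artanh_inv he).symm
    _ ≤ (cosh y / sinh y) ^ (sinh y ^ 2) :=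
        (strictMonoOn_coth_rpow_sinh_sq (artanh_inv_pos he) hy
          (artanh_inv_lt_of_coth_lt hy hcoth)).le
end

section
/- Let (Y_1,…,Y_K) have the Dirichlet distribution Dir(α_1,…,α_K) with all α_i > 0, and let β_1,…,β_K be nonnegative integers. Then E[∏_{i=1}^K Y_i^{β_i}] ≤ ∏_{i=1}^K E[Y_i^{β_i}]. Explicitly, Γ(A)/Γ(A+B) ∏_i Γ(α_i+β_i)/Γ(α_i) ≤ ∏_i [Γ(A)/Γ(A+β_i)] · [Γ(α_i+β_i)/Γ(α_i)], where A = ∑_i α_i and B = ∑_i β_i. -/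
open Real Finset

/-! Since `log ∘ Γ` is convex, `x ↦ log Γ(A + x) - log Γ(A)` is superadditive on `[0, ∞)`, whence
`∏ᵢ Γ(A + βᵢ)/Γ(A) ≤ Γ(A + B)/Γ(A)`. Inverting this gives the claim, as the factors
`Γ(αᵢ + βᵢ)/Γ(αᵢ)` appear on both sides. -/

theorem ConvexOn.map_add_add_map_add_le {s : Set ℝ} {f : ℝ → ℝ} (hf : ConvexOn ℝ s f)
    {a x y : ℝ} (ha : a ∈ s) (hxy : a + x + y ∈ s) (hx : 0 ≤ x) (hy : 0 ≤ y) :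
    f (a + x) + f (a + y) ≤ f a + f (a + x + y) := by
  rcases (add_nonneg hx hy).eq_or_lt with h | h
  · obtain ⟨rfl, rfl⟩ : x = 0 ∧ y = 0 := ⟨by linarith, by linarith⟩
    simp
  have hcomb : ∀ u v : ℝ, 0 ≤ u → 0 ≤ v → u + v = x + y →
      f (a + u) ≤ v / (x + y) * f a + u / (x + y) * f (a + x + y) := by
    intro u v hu hv huv
    have hmid : v / (x + y) * a + u / (x + y) * (a + x + y) = a + u := by
      field_simp
      linear_combination a * huv
    simpa only [smul_eq_mul, hmid] using
      hf.2 ha hxy (div_nonneg hv h.le) (div_nonneg hu h.le) (by field_simp; linarith)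
  have hweights : y / (x + y) + x / (x + y) = 1 := by field_simp; ring
  linear_combination hcomb x y hx hy rfl + hcomb y x hy hx (add_comm y x) +
    (f a + f (a + x + y)) * hweights

namespace Real

theorem Gamma_add_mul_Gamma_add_le {a x y : ℝ} (ha : 0 < a) (hx : 0 ≤ x) (hy : 0 ≤ y) :
    Gamma (a + x) * Gamma (a + y) ≤ Gamma a * Gamma (a + x + y) := by
  have haxy : 0 < a + x + y := by linarith
  have hx' := Gamma_pos_of_pos (add_pos_of_pos_of_nonneg ha hx)
  have hy' := Gamma_pos_of_pos (add_pos_of_pos_of_nonneg ha hy)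
  have ha' := Gamma_pos_of_pos ha
  have hxy' := Gamma_pos_of_pos haxy
  rw [← log_le_log_iff (by positivity) (by positivity), log_mul hx'.ne' hy'.ne',
    log_mul ha'.ne' hxy'.ne']
  exact convexOn_log_Gamma.map_add_add_map_add_le ha haxy hx hy

theorem prod_Gamma_add_div_le {ι : Type*} (s : Finset ι) {a : ℝ} (ha : 0 < a) {x : ι → ℝ}
    (hx : ∀ i ∈ s, 0 ≤ x i) :
    ∏ i ∈ s, Gamma (a + x i) / Gamma a ≤ Gamma (a + ∑ i ∈ s, x i) / Gamma a := by
  induction s using Finset.cons_induction with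
  | empty => simp [(Gamma_pos_of_pos ha).ne']
  | cons j s hj ih =>
    rw [forall_mem_cons] at hx
    have hΓj := Gamma_pos_of_pos (add_pos_of_pos_of_nonneg ha hx.1)
    have hΓa := Gamma_pos_of_pos ha
    rw [prod_cons, sum_cons, ← add_assoc]
    calc Gamma (a + x j) / Gamma a * ∏ i ∈ s, Gamma (a + x i) / Gamma a
        ≤ Gamma (a + x j) / Gamma a * (Gamma (a + ∑ i ∈ s, x i) / Gamma a) := by
          gcongr
          exact ih hx.2
      _ = Gamma (a + x j) * Gamma (a + ∑ i ∈ s, x i) / Gamma a / Gamma a := by ring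
      _ ≤ Gamma a * Gamma (a + x j + ∑ i ∈ s, x i) / Gamma a / Gamma a := by
          gcongr ?_ / _ / _
          exact Gamma_add_mul_Gamma_add_le ha hx.1 (sum_nonneg hx.2)
      _ = Gamma (a + x j + ∑ i ∈ s, x i) / Gamma a := by field_simp

end Real

/-- Negative correlation of Dirichlet moments, stated via the explicit Gamma-function
formula: for `α_i > 0` and nonnegative integers `β_i`, with `A = ∑ α_i`, `B = ∑ β_i`,
`Γ(A)/Γ(A+B) ∏ Γ(α_i+β_i)/Γ(α_i) ≤ ∏ (Γ(A)/Γ(A+β_i)) (Γ(α_i+β_i)/Γ(α_i))`. -/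
theorem stmt5 (K : ℕ) (α : Fin K → ℝ) (hα : ∀ i, 0 < α i) (β : Fin K → ℕ) :
    Real.Gamma (∑ i, α i) / Real.Gamma ((∑ i, α i) + (∑ i, (β i : ℝ)))
        * ∏ i, Real.Gamma (α i + (β i : ℝ)) / Real.Gamma (α i)
      ≤ ∏ i, (Real.Gamma (∑ j, α j) / Real.Gamma ((∑ j, α j) + (β i : ℝ)))
          * (Real.Gamma (α i + (β i : ℝ)) / Real.Gamma (α i)) := by
  rcases isEmpty_or_nonempty (Fin K) with _ | _
  · simp
  set A := ∑ i, α i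
  have hA : 0 < A := sum_pos (fun i _ => hα i) univ_nonempty
  have hratio : ∏ i, Gamma (A + β i) / Gamma A ≤ Gamma (A + ∑ i, (β i : ℝ)) / Gamma A :=
    prod_Gamma_add_div_le univ hA fun i _ => Nat.cast_nonneg _
  rw [prod_mul_distrib]
  gcongr
  · exact prod_nonneg fun i _ => div_nonneg (Gamma_nonneg_of_nonneg (by linarith [hα i]))
      (Gamma_nonneg_of_nonneg (hα i).le)
  calc Gamma A / Gamma (A + ∑ i, (β i : ℝ))
      = (Gamma (A + ∑ i, (β i : ℝ)) / Gamma A)⁻¹ := (inv_div _ _).symm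
    _ ≤ (∏ i, Gamma (A + β i) / Gamma A)⁻¹ := inv_anti₀ (prod_pos fun i _ =>
        div_pos (Gamma_pos_of_pos (by positivity)) (Gamma_pos_of_pos hA)) hratio
    _ = ∏ i, Gamma A / Gamma (A + β i) := by simp
end

section
/- There is an absolute constant C > 0 such that for all integers L > i_1 ≥ 2, all t > 0, and all nonnegative integers β_1 with β_1 ≤ t(i_1 − 1): (L−1)!/(L+β_1−1)! · (i_1+β_1−1)!/(i_1−1)! ≤ C √(1+t) · ((i_1−1)/(L−1) · (1+t)^{1+1/t}/e)^{β_1}. -/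
/-!
Write `a = i₁ - 1`, `M = L - 1`, `b = β₁`. Then `M! / (M + b)! ≤ M ^ (-b)`, and since the
Stirling sequence `n! / (√(2n) (n/e)^n)` is decreasing,
`(a + b)! / a! ≤ √((a + b)/a) (a/e)^b ((a + b)/a)^(a + b)`.
With `z = b / a ≤ t` the last factor is `((1 + z)^(1 + 1/z))^b`, and `z ↦ (1 + z)^(1 + 1/z)`
is increasing, so the bound holds with `C = 1`.
-/

open Real Nat

theorem strictMonoOn_one_add_inv_mul_log_one_add :
    StrictMonoOn (fun x : ℝ => (1 + x⁻¹) * log (1 + x)) (Set.Ioi 0) := by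
  have hderiv : ∀ x : ℝ, 0 < x → HasDerivAt (fun x : ℝ => (1 + x⁻¹) * log (1 + x))
      ((x - log (1 + x)) / x ^ 2) x := by
    intro x hx
    have h := ((hasDerivAt_inv hx.ne').const_add 1).fun_mul
      (((hasDerivAt_id x).const_add 1).log (by simp; positivity))
    refine h.congr_deriv ?_
    simp only [id_eq]
    field_simp
    ring
  refine strictMonoOn_of_deriv_pos (convex_Ioi 0)
    (fun x hx => (hderiv x hx).continuousAt.continuousWithinAt) fun x hx => ?_
  rw [interior_Ioi, Set.mem_Ioi] at hx
  rw [(hderiv x hx).deriv]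
  have hlog : log (1 + x) < x := by
    linarith [log_lt_sub_one_of_pos (x := 1 + x) (by linarith) (by linarith)]
  exact div_pos (by linarith) (by positivity)

theorem one_add_rpow_one_add_inv_le_of_le {z t : ℝ} (hz : 0 < z) (hzt : z ≤ t) :
    (1 + z) ^ (1 + 1 / z) ≤ (1 + t) ^ (1 + 1 / t) := by
  have ht : 0 < t := hz.trans_le hzt
  rw [rpow_def_of_pos (by linarith), rpow_def_of_pos (by linarith), exp_le_exp,
    mul_comm, mul_comm (Real.log _), one_div, one_div]
  exact strictMonoOn_one_add_inv_mul_log_one_add.monotoneOn hz ht hzt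

theorem add_div_rpow_add_le {x y t : ℝ} (hx : 0 < x) (hy : 0 ≤ y) (hyt : y ≤ t * x) :
    ((x + y) / x) ^ (x + y) ≤ ((1 + t) ^ (1 + 1 / t)) ^ y := by
  rcases hy.eq_or_lt with rfl | hy
  · simp [div_self hx.ne']
  have hz : 0 < y / x := div_pos hy hx
  -- with `z = y / x`, the exponent `x + y` is `y * (1 + 1 / z)`
  calc ((x + y) / x) ^ (x + y) = ((1 + y / x) ^ (1 + 1 / (y / x))) ^ y := by
        rw [← rpow_mul (by positivity)]
        congr 1
        · field_simp
        · field_simp; ring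
    _ ≤ ((1 + t) ^ (1 + 1 / t)) ^ y :=
        rpow_le_rpow (by positivity) (one_add_rpow_one_add_inv_le_of_le hz
          ((div_le_iff₀ hx).2 hyt)) hy.le

theorem factorial_eq_stirlingSeq_mul {n : ℕ} (hn : n ≠ 0) :
    (n ! : ℝ) = Stirling.stirlingSeq n * (√(2 * n) * (n / exp 1) ^ n) := by
  rw [Stirling.stirlingSeq, div_mul_cancel₀ _ (by positivity)]

theorem stirlingSeq_le_of_le {m n : ℕ} (hm : m ≠ 0) (hmn : m ≤ n) :
    Stirling.stirlingSeq n ≤ Stirling.stirlingSeq m := by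
  obtain ⟨m, rfl⟩ := exists_eq_succ_of_ne_zero hm
  obtain ⟨n, rfl⟩ := exists_eq_succ_of_ne_zero (by omega : n ≠ 0)
  exact Stirling.stirlingSeq'_antitone (succ_le_succ_iff.1 hmn)

theorem factorial_add_div_factorial_le {a : ℕ} (ha : a ≠ 0) (b : ℕ) :
    ((a + b)! : ℝ) / a ! ≤
      √(((a : ℝ) + b) / a) * ((a : ℝ) / exp 1) ^ b * (((a : ℝ) + b) / a) ^ (a + b) := by
  have ha' : (0 : ℝ) < a := by positivity
  have hsqrt : √(((a : ℝ) + b) / a) * √(2 * a) = √(2 * (a + b : ℕ)) := by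
    rw [← sqrt_mul (by positivity)]
    push_cast
    congr 1
    field_simp
  have hpow : ((a : ℝ) / exp 1) ^ b * (((a : ℝ) + b) / a) ^ (a + b) * (a / exp 1) ^ a
      = ((a + b : ℕ) / exp 1) ^ (a + b) := by
    rw [mul_right_comm, ← pow_add, add_comm b, ← mul_pow]
    push_cast
    congr 1
    field_simp
  rw [div_le_iff₀ (by positivity)]
  calc ((a + b)! : ℝ)
      = Stirling.stirlingSeq (a + b) * (√(2 * (a + b : ℕ)) * ((a + b : ℕ) / exp 1) ^ (a + b)) :=
        factorial_eq_stirlingSeq_mul (by omega)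
    _ ≤ Stirling.stirlingSeq a * (√(2 * (a + b : ℕ)) * ((a + b : ℕ) / exp 1) ^ (a + b)) := by
        gcongr
        exact stirlingSeq_le_of_le ha (by omega)
    _ = √(((a : ℝ) + b) / a) * ((a : ℝ) / exp 1) ^ b * (((a : ℝ) + b) / a) ^ (a + b)
          * (Stirling.stirlingSeq a * (√(2 * a) * (a / exp 1) ^ a)) := by
        rw [← hsqrt, ← hpow]
        ring
    _ = _ := by rw [factorial_eq_stirlingSeq_mul ha]

theorem factorial_div_factorial_add_le (m n : ℕ) :
    (m ! : ℝ) / (m + n)! ≤ (((m : ℝ) + 1) ^ n)⁻¹ := by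
  rw [div_le_iff₀ (by positivity), inv_mul_eq_div, le_div_iff₀ (by positivity)]
  exact_mod_cast factorial_mul_pow_le_factorial

theorem factorial_div_factorial_add_mul_factorial_add_div_factorial_le {a M b : ℕ} {t : ℝ}
    (ha : a ≠ 0) (hM : M ≠ 0) (hb : (b : ℝ) ≤ t * a) :
    (M ! : ℝ) / (M + b)! * (a + b)! / a ! ≤
      √(1 + t) * ((a / M) * (1 + t) ^ (1 + 1 / t) / exp 1) ^ b := by
  have ha' : (0 : ℝ) < a := by positivity
  have hM' : (0 : ℝ) < M := by positivity
  have hba : ((a : ℝ) + b) / a ≤ 1 + t := by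
    rw [div_le_iff₀ ha']
    linarith
  have hfirst : (M ! : ℝ) / (M + b)! ≤ ((M : ℝ) ^ b)⁻¹ :=
    (factorial_div_factorial_add_le M b).trans
      (inv_anti₀ (by positivity) (pow_le_pow_left₀ hM'.le (by linarith) b))
  have hpow : (((a : ℝ) + b) / a) ^ (a + b) ≤ ((1 + t) ^ (1 + 1 / t)) ^ b := by
    have := add_div_rpow_add_le ha' (Nat.cast_nonneg b) hb
    rwa [← Nat.cast_add, rpow_natCast, rpow_natCast, Nat.cast_add] at this
  have hsecond : ((a + b)! : ℝ) / a ! ≤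
      √(1 + t) * ((a : ℝ) / exp 1) ^ b * ((1 + t) ^ (1 + 1 / t)) ^ b :=
    (factorial_add_div_factorial_le ha b).trans (by gcongr)
  calc (M ! : ℝ) / (M + b)! * (a + b)! / a ! = (M ! : ℝ) / (M + b)! * ((a + b)! / a !) :=
        mul_div_assoc _ _ _
    _ ≤ ((M : ℝ) ^ b)⁻¹ * (√(1 + t) * ((a : ℝ) / exp 1) ^ b * ((1 + t) ^ (1 + 1 / t)) ^ b) :=
        mul_le_mul hfirst hsecond (by positivity) (by positivity)
    _ = √(1 + t) * ((a / M) * (1 + t) ^ (1 + 1 / t) / exp 1) ^ b := by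
        rw [div_pow, div_pow, mul_pow, div_pow]
        ring

/-- Uniform bound on Beta moments: there is an absolute constant `C > 0` such that for
all integers `L > i₁ ≥ 2`, all `t > 0` and nonnegative integers `β₁ ≤ t(i₁−1)`,
`(L−1)!/(L+β₁−1)! · (i₁+β₁−1)!/(i₁−1)! ≤ C √(1+t) ((i₁−1)/(L−1) · (1+t)^{1+1/t}/e)^{β₁}`. -/
theorem stmt7 :
    ∃ C : ℝ, 0 < C ∧ ∀ (L i₁ : ℕ) (t : ℝ) (β₁ : ℕ),
      2 ≤ i₁ → i₁ < L → 0 < t → (β₁ : ℝ) ≤ t * ((i₁ : ℝ) - 1) →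
      ((L - 1).factorial : ℝ) / ((L + β₁ - 1).factorial : ℝ)
          * ((i₁ + β₁ - 1).factorial : ℝ) / ((i₁ - 1).factorial : ℝ)
        ≤ C * Real.sqrt (1 + t)
          * ((((i₁ : ℝ) - 1) / ((L : ℝ) - 1)) * (1 + t) ^ (1 + 1 / t) / Real.exp 1) ^ β₁ := by
  refine ⟨1, one_pos, fun L i₁ t β₁ hi hiL _ hβ => ?_⟩
  obtain ⟨a, rfl⟩ : ∃ a, i₁ = a + 1 := ⟨i₁ - 1, by omega⟩
  obtain ⟨M, rfl⟩ : ∃ M, L = M + 1 := ⟨L - 1, by omega⟩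
  push_cast at hβ ⊢
  simp only [add_sub_cancel_right, one_mul, show ∀ n k : ℕ, n + 1 + k - 1 = n + k by omega]
    at hβ ⊢
  exact factorial_div_factorial_add_mul_factorial_add_div_factorial_le (by omega) (by omega) hβ
end

section
/- Analogously, if N has the 'even-Poisson' law P(N = 2j) = x^{2j}/((2j)! cosh x) and each of the N updates independently lands in an interval of length t with probability t, then the probability that an odd number land in the interval equals sinh(xt) sinh(x(1−t)) / cosh x. -/
/-!
The inner sum is the odd-index half of the binomial expansion of `(t + (1 - t))^(2i)`, namely
`(1 - (1 - 2t)^(2i)) / 2`. Summing against `x^(2i)/(2i)!` therefore gives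
`(cosh x - cosh (x (1 - 2t))) / 2`, and `cosh (a + b) - cosh (b - a) = 2 sinh a sinh b` with
`a = x t`, `b = x (1 - t)`.
-/

open Real Finset

theorem sum_range_two_mul_eq_sum_pairs {M : Type*} [AddCommMonoid M] (f : ℕ → M) (n : ℕ) :
    ∑ k ∈ range (2 * n), f k = ∑ j ∈ range n, (f (2 * j) + f (2 * j + 1)) := by
  induction n with
  | zero => simp
  | succ n ih => rw [mul_add_one, sum_range_succ, sum_range_succ, ih, sum_range_succ, add_assoc]

theorem two_mul_sum_odd_choose_mul_pow {R : Type*} [CommRing R] (a b : R) (n : ℕ) :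
    2 * ∑ j ∈ range n, (Nat.choose (2 * n) (2 * j + 1) : R) * a ^ (2 * j + 1)
        * b ^ (2 * n - 2 * j - 1)
      = (a + b) ^ (2 * n) - (-a + b) ^ (2 * n) := by
  have hm : ∀ k, a ^ k * b ^ (2 * n - k) * (Nat.choose (2 * n) k : R)
      - (-a) ^ k * b ^ (2 * n - k) * (Nat.choose (2 * n) k : R)
      = (a ^ k - (-a) ^ k) * b ^ (2 * n - k) * (Nat.choose (2 * n) k : R) := fun k => by ring
  rw [add_pow, add_pow, ← sum_sub_distrib, sum_congr rfl fun k _ => hm k, sum_range_succ,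
    sum_range_two_mul_eq_sum_pairs, mul_sum, (even_two_mul n).neg_pow, sub_self, zero_mul,
    zero_mul, add_zero]
  refine sum_congr rfl fun j _ => ?_
  rw [(even_two_mul j).neg_pow, (odd_two_mul_add_one j).neg_pow, sub_self, Nat.sub_sub]
  ring

theorem Real.cosh_add_sub_cosh_sub (a b : ℝ) :
    cosh (a + b) - cosh (b - a) = 2 * sinh a * sinh b := by
  rw [cosh_add, cosh_sub]
  ring

theorem stmt10_general (x t : ℝ) :
    ∑' i : ℕ, (x ^ (2 * i) / ((Nat.factorial (2 * i) : ℝ) * Real.cosh x))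
        * ∑ j ∈ Finset.range i,
            ((Nat.choose (2 * i) (2 * j + 1) : ℝ) * t ^ (2 * j + 1)
              * (1 - t) ^ (2 * i - 2 * j - 1))
      = Real.sinh (x * t) * Real.sinh (x * (1 - t)) / Real.cosh x := by
  have hterm : ∀ i : ℕ, x ^ (2 * i) / ((Nat.factorial (2 * i) : ℝ) * cosh x)
        * ∑ j ∈ range i, (Nat.choose (2 * i) (2 * j + 1) : ℝ) * t ^ (2 * j + 1)
            * (1 - t) ^ (2 * i - 2 * j - 1)
      = (x ^ (2 * i) / (2 * i).factorial - (x * (1 - 2 * t)) ^ (2 * i) / (2 * i).factorial)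
          / (2 * cosh x) := fun i => by
    have hodd := two_mul_sum_odd_choose_mul_pow t (1 - t) i
    rw [add_sub_cancel, one_pow, show -t + (1 - t) = 1 - 2 * t by ring] at hodd
    rw [mul_pow, ← sub_div, ← mul_one_sub, ← hodd]
    field_simp
  have hsum := ((hasSum_cosh x).sub (hasSum_cosh (x * (1 - 2 * t)))).div_const (2 * cosh x)
  rw [funext hterm, hsum.tsum_eq, show x * (1 - 2 * t) = x * (1 - t) - x * t by ring,
    show cosh x = cosh (x * t + x * (1 - t)) by ring_nf, cosh_add_sub_cosh_sub]
  field_simp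

/-- Odd-parity identity for the 'even-Poisson' law: for `x > 0` and `t ∈ [0,1]`,
`∑_i x^{2i}/((2i)! cosh x) ∑_{j : 2j+1 ≤ 2i} C(2i,2j+1) t^{2j+1}(1−t)^{2i−2j−1}
  = sinh(xt) sinh(x(1−t)) / cosh x`. -/
theorem stmt10 (x t : ℝ) (hx : 0 < x) (ht0 : 0 ≤ t) (ht1 : t ≤ 1) :
    ∑' i : ℕ, (x ^ (2 * i) / ((Nat.factorial (2 * i) : ℝ) * Real.cosh x))
        * ∑ j ∈ Finset.range i,
            ((Nat.choose (2 * i) (2 * j + 1) : ℝ) * t ^ (2 * j + 1)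
              * (1 - t) ^ (2 * i - 2 * j - 1))
      = Real.sinh (x * t) * Real.sinh (x * (1 - t)) / Real.cosh x :=
  stmt10_general x t
end

section
/- Let x₀ = ln(1+√2) (so sinh x₀ = 1, cosh x₀ = √2) and x_c(N) = x₀ − (√2/2)(ln N)/N. If ε_N ≥ 0 satisfies N ε_N → ∞ and ε_N ≤ N^{−2/3}, then N · (sinh(x_c(N) − ε_N))^{N−1} · cosh(x_c(N) − ε_N) → 0 as N → ∞. -/
open Real Filter Topology

/-!
`sinh` is log-concave on `(0, ∞)` and `coth x₀ = √2`, so `sinh (x₀ - d) ≤ exp (-√2 d)`. For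
`d = (√2/2) log N / N + ε_N` this gives `N sinh (x_c - ε_N) ^ (N - 1) ≤ exp (log N / N - √2 (N - 1) ε_N)`,
which tends to `0` because `N ε_N → ∞`, while `cosh (x_c - ε_N) → cosh x₀`.
-/

/-- Bernoulli's inequality `p u + (1 - p) ≤ u ^ p` with `p = (1 + c) / 2` and `u = exp (-2d)`,
multiplied by `exp d`. -/
theorem Real.cosh_sub_mul_sinh_le_exp {c : ℝ} (hc : 1 ≤ c) (d : ℝ) :
    cosh d - c * sinh d ≤ exp (-(c * d)) := by
  have bernoulli := one_add_mul_self_le_rpow_one_add (s := exp (-2 * d) - 1)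
    (by linarith [exp_pos (-2 * d)]) (p := (1 + c) / 2) (by linarith)
  rw [add_sub_cancel, ← exp_mul] at bernoulli
  have key := mul_le_mul_of_nonneg_left bernoulli (exp_pos d).le
  rw [cosh_eq, sinh_eq]
  calc (exp d + exp (-d)) / 2 - c * ((exp d - exp (-d)) / 2)
      = exp d * (1 + (1 + c) / 2 * (exp (-2 * d) - 1)) := by
        rw [show -d = d + -2 * d by ring, exp_add]; ring
    _ ≤ exp d * exp (-2 * d * ((1 + c) / 2)) := key
    _ = exp (-(c * d)) := by rw [← exp_add]; ring_nf

/-- The tangent-line bound expressing the log-concavity of `sinh` on `(0, ∞)`. -/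
theorem Real.sinh_sub_le_mul_exp {y : ℝ} (hy : 0 < y) (d : ℝ) :
    sinh (y - d) ≤ sinh y * exp (-(cosh y / sinh y * d)) := by
  have hsinh : 0 < sinh y := sinh_pos_iff.2 hy
  have hcoth : 1 ≤ cosh y / sinh y := (one_le_div hsinh).2 (sinh_lt_cosh y).le
  calc sinh (y - d) = sinh y * (cosh d - cosh y / sinh y * sinh d) := by
        rw [sinh_sub]; field_simp
    _ ≤ sinh y * exp (-(cosh y / sinh y * d)) :=
        mul_le_mul_of_nonneg_left (cosh_sub_mul_sinh_le_exp hcoth d) hsinh.le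

theorem Real.log_one_add_sqrt_two_pos : 0 < log (1 + √2) :=
  log_pos (by linarith [sqrt_pos.2 (show (0 : ℝ) < 2 by norm_num)])

theorem Real.exp_neg_log_one_add_sqrt_two : exp (-log (1 + √2)) = √2 - 1 := by
  have h : 0 < 1 + √2 := by positivity
  rw [exp_neg, exp_log h]
  exact inv_eq_of_mul_eq_one_right (by nlinarith [sq_sqrt (show (0 : ℝ) ≤ 2 by norm_num)])

theorem Real.sinh_log_one_add_sqrt_two : sinh (log (1 + √2)) = 1 := by
  rw [sinh_eq, exp_neg_log_one_add_sqrt_two, exp_log (by positivity)]; ring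

theorem Real.cosh_log_one_add_sqrt_two : cosh (log (1 + √2)) = √2 := by
  rw [cosh_eq, exp_neg_log_one_add_sqrt_two, exp_log (by positivity)]; ring

theorem Real.sinh_log_one_add_sqrt_two_sub_le (d : ℝ) :
    sinh (log (1 + √2) - d) ≤ exp (-(√2 * d)) := by
  simpa [sinh_log_one_add_sqrt_two, cosh_log_one_add_sqrt_two] using
    sinh_sub_le_mul_exp log_one_add_sqrt_two_pos d

/-- Apply `sinh (x₀ - d) ≤ exp (-√2 d)` with `d = (√2/2) log N / N + e`: the factor `√2/2` makes
`(N - 1) √2 d` cancel `log N` up to `log N / N`. -/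
theorem natCast_mul_sinh_pow_le {N : ℕ} (hN : 1 ≤ N) (e : ℝ)
    (hs : 0 ≤ sinh (log (1 + √2) - √2 / 2 * log N / N - e)) :
    N * sinh (log (1 + √2) - √2 / 2 * log N / N - e) ^ (N - 1)
      ≤ exp (log N / N - √2 * ((N - 1) * e)) := by
  have hN0 : (0 : ℝ) < N := by exact_mod_cast hN
  have hsinh := sinh_log_one_add_sqrt_two_sub_le (√2 / 2 * log N / N + e)
  rw [← sub_sub] at hsinh
  calc (N : ℝ) * sinh (log (1 + √2) - √2 / 2 * log N / N - e) ^ (N - 1)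
      ≤ exp (log N) * exp (-(√2 * (√2 / 2 * log N / N + e))) ^ (N - 1) := by
        rw [exp_log hN0]; gcongr
    _ = exp (log N / N - √2 * ((N - 1) * e)) := by
        rw [← exp_nat_mul, ← exp_add, Nat.cast_sub hN, Nat.cast_one]
        congr 1
        field_simp
        linear_combination (-((N : ℝ) - 1) * log N) * mul_self_sqrt (show (0 : ℝ) ≤ 2 by norm_num)

theorem tendsto_log_natCast_div_natCast :
    Tendsto (fun N : ℕ => log N / N) atTop (𝓝 0) := by
  simpa [Function.comp_def] using (tendsto_pow_log_div_mul_add_atTop 1 0 1 one_ne_zero).comp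
    tendsto_natCast_atTop_atTop

/-- Subcritical first-moment bound, antipodal case: with `x₀ = ln(1+√2)` and
`x_c(N) = x₀ − (√2/2)(ln N)/N`, if `ε_N ≥ 0`, `N ε_N → ∞` and `ε_N ≤ N^(−2/3)`, then
`N (sinh(x_c − ε_N))^{N−1} cosh(x_c − ε_N) → 0`. -/
theorem stmt13 (ε : ℕ → ℝ) (hε0 : ∀ N, 0 ≤ ε N)
    (hεinf : Tendsto (fun N : ℕ => (N : ℝ) * ε N) atTop atTop)
    (hεsmall : ∀ N : ℕ, 1 ≤ N → ε N ≤ (N : ℝ) ^ (-(2 : ℝ) / 3)) :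
    Tendsto (fun N : ℕ =>
        (N : ℝ) * (Real.sinh (Real.log (1 + Real.sqrt 2)
            - Real.sqrt 2 / 2 * Real.log N / N - ε N)) ^ (N - 1)
          * Real.cosh (Real.log (1 + Real.sqrt 2)
            - Real.sqrt 2 / 2 * Real.log N / N - ε N))
      atTop (nhds 0) := by
  have hε : Tendsto ε atTop (𝓝 0) :=
    squeeze_zero' (.of_forall hε0) (eventually_atTop.2 ⟨1, hεsmall⟩)
      ((tendsto_rpow_neg_atTop (by norm_num : (0 : ℝ) < 2 / 3)).comp tendsto_natCast_atTop_atTop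
        |>.congr fun N => by simp [neg_div])
  have harg : Tendsto (fun N : ℕ => log (1 + √2) - √2 / 2 * log N / N - ε N) atTop
      (𝓝 (log (1 + √2))) := by
    have := ((tendsto_log_natCast_div_natCast.const_mul (√2 / 2)).add hε).const_sub (log (1 + √2))
    rw [mul_zero, add_zero, sub_zero] at this
    exact this.congr fun N => by ring
  have hexponent : Tendsto (fun N : ℕ => log N / N - √2 * ((N - 1) * ε N)) atTop atBot := by
    have := (tendsto_log_natCast_div_natCast.add (hε.const_mul √2)).add_atBot
      (tendsto_neg_atTop_atBot.comp (hεinf.const_mul_atTop (sqrt_pos.2 two_pos)))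
    refine this.congr fun N => ?_
    simp only [Function.comp_apply]
    ring
  have hpow : Tendsto (fun N : ℕ => (N : ℝ) *
      sinh (log (1 + √2) - √2 / 2 * log N / N - ε N) ^ (N - 1)) atTop (𝓝 0) := by
    have hsinh : ∀ᶠ N : ℕ in atTop, 0 ≤ sinh (log (1 + √2) - √2 / 2 * log N / N - ε N) :=
      (harg.eventually (lt_mem_nhds log_one_add_sqrt_two_pos)).mono
        fun N h => sinh_nonneg_iff.2 h.le
    refine squeeze_zero' (hsinh.mono fun N h => by positivity) ?_
      (tendsto_exp_atBot.comp hexponent)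
    filter_upwards [hsinh, eventually_ge_atTop 1] with N hs hN
    exact natCast_mul_sinh_pow_le hN (ε N) hs
  simpa using hpow.mul ((continuous_cosh.tendsto _).comp harg)
end

section
/- Let c > 0 and t ∈ (0, 1/2] with c t < 0.8, and let a > 0, α' > 0. Define h(t) = t ln sinh(ct) + (a − t) ln cosh(ct). Then h''(t) ≥ (c/((sinh ct)²(cosh ct)²)) (sinh(2ct) − ct cosh(2ct)) > 0; in particular h is strictly convex on {t ∈ (0, 1/2] : ct < 0.8}. -/
open Real Set

/-!
Writing `s = sinh (c t)`, `C = cosh (c t)`, one computes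
`h'' t = c (sinh (2ct) - ct cosh (2ct)) / (s² C²) + c² a / C²`, so the lower bound holds with
slack `c² a / C² ≥ 0`. For `0 < u < 0.8`, multiplying `sinh (2u) - u cosh (2u)` by `2 exp (2u)`
gives `exp (4u) (1 - u) - (1 + u)`, which `exp u ≥ 1 + u` bounds below by
`(1 + u)⁴ (1 - u) - (1 + u) = (1 + u) u (2 - 2u² - u³) > 0`. Strict convexity follows from `h'' > 0`.
-/

lemma sinh_two_mul_sub_mul_cosh_two_mul_pos {u : ℝ} (hu : 0 < u) (hu' : u < 0.8) :
    0 < sinh (2 * u) - u * cosh (2 * u) := by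
  set F := exp u
  have hF : 1 + u ≤ F := by linarith [add_one_le_exp u]
  have hF0 : F ≠ 0 := (exp_pos u).ne'
  have hF2 : exp (2 * u) = F ^ 2 := by rw [two_mul, exp_add]; ring
  have hscaled : (sinh (2 * u) - u * cosh (2 * u)) * (2 * F ^ 2) = F ^ 4 * (1 - u) - (1 + u) := by
    rw [sinh_eq, cosh_eq, exp_neg, hF2]
    field_simp
    ring
  have hpoly : 0 < (1 + u) ^ 4 * (1 - u) - (1 + u) := by
    have : 0 < 2 - 2 * u ^ 2 - u ^ 3 := by nlinarith
    have := mul_pos (mul_pos (by linarith : (0 : ℝ) < 1 + u) hu) this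
    linear_combination this
  have hexp : (1 + u) ^ 4 * (1 - u) ≤ F ^ 4 * (1 - u) := by
    gcongr
    linarith
  have : 0 < (sinh (2 * u) - u * cosh (2 * u)) * (2 * F ^ 2) := by linarith
  exact pos_of_mul_pos_left this (by positivity)

namespace LogSinhCosh

variable {c : ℝ} (a : ℝ)

noncomputable def f (c a : ℝ) (t : ℝ) : ℝ :=
  t * log (sinh (c * t)) + (a - t) * log (cosh (c * t))

noncomputable def lowerBound (c x : ℝ) : ℝ :=
  c / (sinh (c * x) ^ 2 * cosh (c * x) ^ 2) * (sinh (2 * c * x) - c * x * cosh (2 * c * x))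

noncomputable def f' (c a : ℝ) (t : ℝ) : ℝ :=
  log (sinh (c * t)) - log (cosh (c * t)) + c * t * cosh (c * t) / sinh (c * t)
    + c * (a - t) * sinh (c * t) / cosh (c * t)

lemma hasDerivAt_f (hc : 0 < c) {x : ℝ} (hx : 0 < x) : HasDerivAt (f c a) (f' c a x) x := by
  have hs : sinh (c * x) ≠ 0 := (sinh_pos_iff.2 (by positivity)).ne'
  have hcx : HasDerivAt (c * ·) c x := hasDerivAt_const_mul c
  refine (((hasDerivAt_id x).mul (hcx.sinh.log hs)).add
    (((hasDerivAt_const x a).sub (hasDerivAt_id x)).mul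
      (hcx.cosh.log (cosh_pos _).ne'))).congr_deriv ?_
  rw [f']
  field_simp
  simp only [Pi.sub_apply, id_eq]
  ring

lemma hasDerivAt_f' (hc : 0 < c) {x : ℝ} (hx : 0 < x) :
    HasDerivAt (f' c a) (lowerBound c x + c ^ 2 * a / cosh (c * x) ^ 2) x := by
  have hs : sinh (c * x) ≠ 0 := (sinh_pos_iff.2 (by positivity)).ne'
  have hC : cosh (c * x) ≠ 0 := (cosh_pos _).ne'
  have hcx : HasDerivAt (c * ·) c x := hasDerivAt_const_mul c
  refine ((((hcx.sinh.log hs).sub (hcx.cosh.log hC)).add ((hcx.mul hcx.cosh).div hcx.sinh hs)).add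
    ((((hasDerivAt_const x a).sub (hasDerivAt_id x)).const_mul c).mul hcx.sinh |>.div
      hcx.cosh hC)).congr_deriv ?_
  rw [lowerBound, show 2 * c * x = 2 * (c * x) by ring, sinh_two_mul, cosh_two_mul]
  simp only [Pi.mul_apply, Pi.sub_apply, id_eq]
  field_simp
  linear_combination (2 * sinh (c * x) * cosh (c * x) - c * x * cosh (c * x) ^ 2
    + c * sinh (c * x) ^ 2 * (a - x)) * cosh_sq_sub_sinh_sq (c * x)

lemma deriv_deriv_f (hc : 0 < c) {x : ℝ} (hx : 0 < x) :
    deriv (deriv (f c a)) x = lowerBound c x + c ^ 2 * a / cosh (c * x) ^ 2 := by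
  have hderiv : deriv (f c a) =ᶠ[nhds x] f' c a := by
    filter_upwards [Ioi_mem_nhds hx] with u hu
    exact (hasDerivAt_f a hc hu).deriv
  rw [hderiv.deriv_eq, (hasDerivAt_f' a hc hx).deriv]

lemma lowerBound_le_deriv_deriv_f (hc : 0 < c) (ha : 0 ≤ a) {x : ℝ} (hx : 0 < x) :
    lowerBound c x ≤ deriv (deriv (f c a)) x := by
  rw [deriv_deriv_f a hc hx]
  have : 0 ≤ c ^ 2 * a / cosh (c * x) ^ 2 := by positivity
  linarith

lemma lowerBound_pos (hc : 0 < c) {x : ℝ} (hx : 0 < x) (hcx : c * x < 0.8) :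
    0 < lowerBound c x := by
  have hs : 0 < sinh (c * x) := sinh_pos_iff.2 (by positivity)
  have hC := cosh_pos (c * x)
  refine mul_pos (by positivity) ?_
  simpa only [mul_assoc] using sinh_two_mul_sub_mul_cosh_two_mul_pos (by positivity) hcx

lemma strictConvexOn_f (hc : 0 < c) (ha : 0 ≤ a) : StrictConvexOn ℝ (Ioo 0 (0.8 / c)) (f c a) := by
  refine strictConvexOn_of_deriv2_pos' (convex_Ioo _ _)
    (fun x hx => (hasDerivAt_f a hc hx.1).continuousAt.continuousWithinAt) fun x hx => ?_
  have hcx : c * x < 0.8 := (lt_div_iff₀' hc).1 hx.2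
  exact (lowerBound_pos hc hx.1 hcx).trans_le (lowerBound_le_deriv_deriv_f a hc ha hx.1)

end LogSinhCosh

theorem stmt15_general (c a t : ℝ) (hc : 0 < c) (ha : 0 < a)
    (ht0 : 0 < t) (hct : c * t < 0.8) :
    ((c / ((Real.sinh (c * t)) ^ 2 * (Real.cosh (c * t)) ^ 2))
        * (Real.sinh (2 * c * t) - c * t * Real.cosh (2 * c * t))
      ≤ deriv (deriv (fun u : ℝ =>
          u * Real.log (Real.sinh (c * u)) + (a - u) * Real.log (Real.cosh (c * u)))) t
      ∧ 0 < (c / ((Real.sinh (c * t)) ^ 2 * (Real.cosh (c * t)) ^ 2))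
        * (Real.sinh (2 * c * t) - c * t * Real.cosh (2 * c * t))) ∧
    StrictConvexOn ℝ {u : ℝ | 0 < u ∧ u ≤ 1 / 2 ∧ c * u < 0.8}
      (fun u : ℝ =>
        u * Real.log (Real.sinh (c * u)) + (a - u) * Real.log (Real.cosh (c * u))) := by
  refine ⟨⟨LogSinhCosh.lowerBound_le_deriv_deriv_f a hc ha.le ht0,
    LogSinhCosh.lowerBound_pos hc ht0 hct⟩, ?_⟩
  have hconvex : Convex ℝ {u : ℝ | 0 < u ∧ u ≤ 1 / 2 ∧ c * u < 0.8} :=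
    Set.OrdConnected.convex ⟨fun x hx y hy z hz =>
      ⟨hx.1.trans_le hz.1, hz.2.trans hy.2.1,
        (mul_le_mul_of_nonneg_left hz.2 hc.le).trans_lt hy.2.2⟩⟩
  exact (LogSinhCosh.strictConvexOn_f a hc ha.le).subset
    (fun u hu => ⟨hu.1, (lt_div_iff₀' hc).2 hu.2.2⟩) hconvex

/-- Convexity of `h(t) = t ln sinh(ct) + (a−t) ln cosh(ct)`: for `c > 0`, `a > 0`,
`α' > 0`, and `t ∈ (0,1/2]` with `ct < 0.8`, the second derivative satisfies
`h''(t) ≥ (c/((sinh ct)²(cosh ct)²))(sinh(2ct) − ct cosh(2ct)) > 0`; in particular `h`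
is strictly convex on `{t ∈ (0,1/2] : ct < 0.8}`. -/
theorem stmt15 (c a α' t : ℝ) (hc : 0 < c) (ha : 0 < a) (hα' : 0 < α')
    (ht0 : 0 < t) (ht : t ≤ 1 / 2) (hct : c * t < 0.8) :
    ((c / ((Real.sinh (c * t)) ^ 2 * (Real.cosh (c * t)) ^ 2))
        * (Real.sinh (2 * c * t) - c * t * Real.cosh (2 * c * t))
      ≤ deriv (deriv (fun u : ℝ =>
          u * Real.log (Real.sinh (c * u)) + (a - u) * Real.log (Real.cosh (c * u)))) t
      ∧ 0 < (c / ((Real.sinh (c * t)) ^ 2 * (Real.cosh (c * t)) ^ 2))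
        * (Real.sinh (2 * c * t) - c * t * Real.cosh (2 * c * t))) ∧
    StrictConvexOn ℝ {u : ℝ | 0 < u ∧ u ≤ 1 / 2 ∧ c * u < 0.8}
      (fun u : ℝ =>
        u * Real.log (Real.sinh (c * u)) + (a - u) * Real.log (Real.cosh (c * u))) :=
  stmt15_general c a t hc ha ht0 hct
end
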